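/- arXiv:1612.00588 — 6 statements merged into one kernel-verified Lean document; each statement's English description precedes it below -/
import Mathlib

section
/- Let 0 < p < 1, q = 1 - p, and N ≥ 0. Define the Krawtchouk polynomials K_k(x,N) by the generating function (1+pv)^(N-x) (1-qv)^x = Σ_{k=0}^N v^k K_k(x,N). Then for 0 ≤ i, j ≤ N, Σ_{x=0}^N binom(N,x) q^(N-x) p^x K_i(x,N) K_j(x,N) = δ_{ij} binom(N,i) (pq)^i. -/
/-!
Multiplying the generating functions at two points `v`, `w` and averaging against the binomial
weights, the binomial theorem collapses the sum to
`(p (1 - q v)(1 - q w) + q (1 + p v)(1 + p w))^N = (1 + p q v w)^N`, because `p + q = 1`.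
Only the diagonal monomials `(v w)^k` occur, with coefficients `binom(N,k) (pq)^k`; comparing
coefficients of `v^i w^j` gives the orthogonality relations.
-/

open Finset Polynomial

section CoefficientComparison

variable {R : Type*} [CommRing R] [IsDomain R] [Infinite R]

theorem eq_of_forall_sum_range_pow_mul_eq {n : ℕ} {a b : ℕ → R}
    (h : ∀ v : R, ∑ k ∈ range n, v ^ k * a k = ∑ k ∈ range n, v ^ k * b k) :
    ∀ k < n, a k = b k := by
  have hpoly : ∑ k ∈ range n, C (a k) * X ^ k = ∑ k ∈ range n, C (b k) * X ^ k :=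
    Polynomial.funext fun v => by
      simpa only [eval_finsetSum, eval_mul, eval_C, eval_pow, eval_X, mul_comm] using h v
  intro k hk
  simpa [finsetSum_coeff, coeff_C_mul, coeff_X_pow, hk] using congrArg (coeff · k) hpoly

theorem eq_ite_of_forall_sum_range_pow_mul_sum_eq {n : ℕ} {S : ℕ → ℕ → R} {d : ℕ → R}
    (h : ∀ v w : R, ∑ a ∈ range n, v ^ a * ∑ b ∈ range n, w ^ b * S a b =
      ∑ k ∈ range n, v ^ k * (w ^ k * d k)) :
    ∀ a < n, ∀ b < n, S a b = if a = b then d a else 0 := by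
  intro a ha
  have hrow : ∀ w : R, ∑ b ∈ range n, w ^ b * S a b = w ^ a * d a := fun w =>
    eq_of_forall_sum_range_pow_mul_eq (h · w) a ha
  refine eq_of_forall_sum_range_pow_mul_eq fun w => ?_
  simp [hrow, mul_ite, ha]

end CoefficientComparison

section GeneratingFunction

variable {R : Type*} [CommRing R]

theorem sum_mul_sum_pow_mul_sum_pow_mul {ι : Type*} (s : Finset ι) (t : Finset ℕ) (c : ι → R)
    (K : ℕ → ι → R) (v w : R) :
    ∑ x ∈ s, c x * ((∑ a ∈ t, v ^ a * K a x) * ∑ b ∈ t, w ^ b * K b x) =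
      ∑ a ∈ t, v ^ a * ∑ b ∈ t, w ^ b * ∑ x ∈ s, c x * K a x * K b x := by
  simp_rw [sum_mul_sum, mul_sum]
  rw [sum_comm]
  refine sum_congr rfl fun a _ => ?_
  rw [sum_comm]
  exact sum_congr rfl fun b _ => sum_congr rfl fun x _ => by ring

theorem sum_choose_mul_krawtchouk_genFun_mul {p q : R} (hpq : p + q = 1) (N : ℕ) (v w : R) :
    ∑ x ∈ range (N + 1), (N.choose x : R) * q ^ (N - x) * p ^ x *
        ((1 + p * v) ^ (N - x) * (1 - q * v) ^ x * ((1 + p * w) ^ (N - x) * (1 - q * w) ^ x)) =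
      ∑ k ∈ range (N + 1), v ^ k * (w ^ k * ((N.choose k : R) * (p * q) ^ k)) := by
  have hbase : p * (1 - q * v) * (1 - q * w) + q * (1 + p * v) * (1 + p * w) =
      p * q * (v * w) + 1 := by
    linear_combination (1 + p * q * v * w) * hpq
  calc _ = (p * (1 - q * v) * (1 - q * w) + q * (1 + p * v) * (1 + p * w)) ^ N := by
        rw [add_pow]
        exact sum_congr rfl fun x _ => by rw [mul_pow, mul_pow, mul_pow, mul_pow]; ring
    _ = _ := by
        rw [hbase, add_pow]
        exact sum_congr rfl fun k _ => by ring

end GeneratingFunction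

theorem krawtchouk_orthogonality_general
    (p q : ℝ) (hq : q = 1 - p)
    (N : ℕ) (K : ℕ → ℕ → ℝ)
    (hK : ∀ x ≤ N, ∀ v : ℝ,
      (1 + p * v) ^ (N - x) * (1 - q * v) ^ x =
        ∑ k ∈ range (N + 1), v ^ k * K k x) :
    ∀ i ≤ N, ∀ j ≤ N,
      ∑ x ∈ range (N + 1),
          (N.choose x : ℝ) * q ^ (N - x) * p ^ x * K i x * K j x =
        (if i = j then (N.choose i : ℝ) * (p * q) ^ i else 0) := by
  have hgen : ∀ v w : ℝ,
      ∑ a ∈ range (N + 1), v ^ a * ∑ b ∈ range (N + 1), w ^ b *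
          ∑ x ∈ range (N + 1), (N.choose x : ℝ) * q ^ (N - x) * p ^ x * K a x * K b x =
        ∑ k ∈ range (N + 1), v ^ k * (w ^ k * ((N.choose k : ℝ) * (p * q) ^ k)) := by
    intro v w
    rw [← sum_mul_sum_pow_mul_sum_pow_mul, ← sum_choose_mul_krawtchouk_genFun_mul (by rw [hq]; ring)]
    refine sum_congr rfl fun x hx => ?_
    have hxN : x ≤ N := Nat.lt_succ_iff.mp (mem_range.mp hx)
    rw [hK x hxN v, hK x hxN w]
  intro i hi j hj
  exact eq_ite_of_forall_sum_range_pow_mul_sum_eq hgen i (by omega) j (by omega)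

/-- Orthogonality of one-variable Krawtchouk polynomials with respect to the
binomial distribution. -/
theorem krawtchouk_orthogonality
    (p q : ℝ) (hp : 0 < p) (hp1 : p < 1) (hq : q = 1 - p)
    (N : ℕ) (K : ℕ → ℕ → ℝ)
    (hK : ∀ x ≤ N, ∀ v : ℝ,
      (1 + p * v) ^ (N - x) * (1 - q * v) ^ x =
        ∑ k ∈ range (N + 1), v ^ k * K k x) :
    ∀ i ≤ N, ∀ j ≤ N,
      ∑ x ∈ range (N + 1),
          (N.choose x : ℝ) * q ^ (N - x) * p ^ x * K i x * K j x =
        (if i = j then (N.choose i : ℝ) * (p * q) ^ i else 0) :=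
  krawtchouk_orthogonality_general p q hq N K hK
end

section
/- Let A be a (d+1)×(d+1) real matrix, Ā its N-th induced matrix, and B the diagonal matrix indexed by multi-indices of total degree N with entries B_{mm} = multinomial(N; m_0,...,m_d). Then the induced matrix of the transpose satisfies (Aᵀ)‾ = B⁻¹ (Ā)ᵀ B. -/
/-!
Both sides are coefficients of one polynomial in two sets of variables: expanding
`(x ⬝ᵥ A y)^N` by the multinomial theorem gives `∑ₘ ∑ₙ B_m Ā_{mn} xᵐ yⁿ`, while the same
number `(y ⬝ᵥ Aᵀ x)^N` expands to `∑ₙ ∑ₘ B_n (Aᵀ)‾_{nm} yⁿ xᵐ`. Monomials in `(x, y)` are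
linearly independent over the infinite field `ℝ`, so `B_m Ā_{mn} = B_n (Aᵀ)‾_{nm}`.
-/

open Finset Matrix

namespace MvPolynomial

variable {ι κ R : Type*} [Fintype ι] [Fintype κ] [CommRing R] [IsDomain R] [Infinite R]

theorem coeff_eq_of_forall_sum_mul_prod_pow_eq {S : Finset (ι → ℕ)} {c c' : (ι → ℕ) → R}
    (h : ∀ x : ι → R, ∑ k ∈ S, c k * ∏ j, x j ^ k j = ∑ k ∈ S, c' k * ∏ j, x j ^ k j) :
    ∀ k ∈ S, c k = c' k := by
  classical
  let e : (ι → ℕ) ≃ (ι →₀ ℕ) := Finsupp.equivFunOnFinite.symm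
  let p : ((ι → ℕ) → R) → MvPolynomial ι R := fun c => ∑ l ∈ S, monomial (e l) (c l)
  have hcoeff : ∀ c, ∀ k ∈ S, (p c).coeff (e k) = c k := fun c k hk => by
    simp only [p, coeff_sum, coeff_monomial, e.injective.eq_iff]
    rw [sum_ite_eq' S k, if_pos hk]
  have heval : ∀ c x, eval x (p c) = ∑ k ∈ S, c k * ∏ j, x j ^ k j := fun c x => by
    simp [p, e, eval_monomial, Finsupp.prod_fintype]
  have hp : p c = p c' := funext fun x => by rw [heval, heval, h]
  intro k hk
  rw [← hcoeff c k hk, ← hcoeff c' k hk, hp]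

theorem coeff_eq_of_forall_sum_sum_mul_prod_pow_eq {S : Finset (ι → ℕ)} {T : Finset (κ → ℕ)}
    {c c' : (ι → ℕ) → (κ → ℕ) → R}
    (h : ∀ (x : ι → R) (y : κ → R),
      ∑ k ∈ S, ∑ l ∈ T, c k l * (∏ i, x i ^ k i) * ∏ j, y j ^ l j =
        ∑ k ∈ S, ∑ l ∈ T, c' k l * (∏ i, x i ^ k i) * ∏ j, y j ^ l j) :
    ∀ k ∈ S, ∀ l ∈ T, c k l = c' k l := by
  have hx : ∀ y : κ → R, ∀ k ∈ S,
      ∑ l ∈ T, c k l * ∏ j, y j ^ l j = ∑ l ∈ T, c' k l * ∏ j, y j ^ l j := fun y =>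
    coeff_eq_of_forall_sum_mul_prod_pow_eq fun x => by
      simpa only [sum_mul, mul_right_comm _ (∏ i, x i ^ _)] using h x y
  exact fun k hk => coeff_eq_of_forall_sum_mul_prod_pow_eq fun y => hx y k hk

end MvPolynomial

namespace Matrix

variable {ι R : Type*} [Fintype ι] [DecidableEq ι] [CommSemiring R]

theorem dotProduct_mulVec_pow_eq_sum_induced {N : ℕ} (A : Matrix ι ι R)
    (Abar : (ι → ℕ) → (ι → ℕ) → R)
    (hA : ∀ m ∈ piAntidiag univ N, ∀ v : ι → R,
      ∏ i, (A *ᵥ v) i ^ m i = ∑ n ∈ piAntidiag univ N, Abar m n * ∏ j, v j ^ n j)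
    (x y : ι → R) :
    (x ⬝ᵥ A *ᵥ y) ^ N = ∑ m ∈ piAntidiag univ N, ∑ n ∈ piAntidiag univ N,
      Nat.multinomial univ m * Abar m n * (∏ i, x i ^ m i) * ∏ j, y j ^ n j := by
  rw [dotProduct, sum_pow_eq_sum_piAntidiag]
  refine sum_congr rfl fun m hm => ?_
  rw [prod_congr rfl fun i _ => mul_pow (x i) _ (m i), prod_mul_distrib, hA m hm, mul_sum,
    mul_sum]
  exact sum_congr rfl fun n _ => by ring

end Matrix

/-- Transpose Lemma: the induced matrix of the transpose satisfies
`(Aᵀ)‾ = B⁻¹ (Ā)ᵀ B`, where `B` is the diagonal matrix of multinomial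
coefficients at level `N`. Entrywise: `(Aᵀ)‾_{mn} = (B_m)⁻¹ · Ā_{nm} · B_n`. -/
theorem induced_matrix_transpose_lemma
    (d N : ℕ)
    (A : Matrix (Fin (d + 1)) (Fin (d + 1)) ℝ)
    (Abar ATbar : (Fin (d + 1) → ℕ) → (Fin (d + 1) → ℕ) → ℝ)
    (hA : ∀ m ∈ Finset.Nat.antidiagonalTuple (d + 1) N, ∀ v : Fin (d + 1) → ℝ,
      ∏ i, (∑ j, A i j * v j) ^ m i =
        ∑ n ∈ Finset.Nat.antidiagonalTuple (d + 1) N,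
          Abar m n * ∏ j, v j ^ n j)
    (hAT : ∀ m ∈ Finset.Nat.antidiagonalTuple (d + 1) N, ∀ v : Fin (d + 1) → ℝ,
      ∏ i, (∑ j, Aᵀ i j * v j) ^ m i =
        ∑ n ∈ Finset.Nat.antidiagonalTuple (d + 1) N,
          ATbar m n * ∏ j, v j ^ n j) :
    ∀ m ∈ Finset.Nat.antidiagonalTuple (d + 1) N,
      ∀ n ∈ Finset.Nat.antidiagonalTuple (d + 1) N,
        ATbar m n =
          (Nat.multinomial Finset.univ m : ℝ)⁻¹ * Abar n m *
            (Nat.multinomial Finset.univ n : ℝ) := by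
  rw [← piAntidiag_univ_fin_eq_antidiagonalTuple] at hA hAT ⊢
  have hsym : ∀ x y : Fin (d + 1) → ℝ, x ⬝ᵥ A *ᵥ y = y ⬝ᵥ Aᵀ *ᵥ x := fun x y => by
    rw [dotProduct_mulVec, ← mulVec_transpose, dotProduct_comm]
  have hcoeff := MvPolynomial.coeff_eq_of_forall_sum_sum_mul_prod_pow_eq
    (c' := fun k l => Nat.multinomial univ l * ATbar l k) fun x y => by
    rw [← dotProduct_mulVec_pow_eq_sum_induced A Abar hA, hsym,
      dotProduct_mulVec_pow_eq_sum_induced Aᵀ ATbar hAT, sum_comm]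
    exact sum_congr rfl fun _ _ => sum_congr rfl fun _ _ => mul_right_comm _ _ _
  intro m hm n hn
  have hBm : (Nat.multinomial univ m : ℝ) ≠ 0 := by exact_mod_cast (Nat.multinomial_pos _ _).ne'
  rw [mul_assoc, eq_inv_mul_iff_mul_eq₀ hBm, mul_comm (Abar n m)]
  exact (hcoeff n hn m hm).symm
end

section
/- Let A satisfy the K-condition Aᵀ𝔭A = D, let Φ = (Ā)ᵀ be the transpose of the N-th induced matrix of A, let B be the diagonal matrix of multinomial coefficients at level N, and let 𝔭̄, D̄ be the induced matrices of 𝔭 and D. Then Φ B 𝔭̄ Φᵀ = B D̄. -/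
/-!
The K-condition says `(A v)ᵀ 𝔭 (A w) = vᵀ D w`. Raising both sides to the `N`-th power and
expanding with the multinomial theorem writes the bilinear form of `Āᵀ B 𝔭̄ Ā` on the monomial
vectors `(v^m)_m`, `(w^n)_n` as that of `B D̄`. Distinct monomials are linearly independent as
functions on `ℝ^(d+1)`, so the two matrices coincide.
-/

open Finset Matrix

variable {ι R : Type*} [Fintype ι]

theorem eqOn_of_forall_sum_mul_prod_pow_eq [CommRing R] [IsDomain R] [Infinite R]
    {T : Finset (ι → ℕ)} {c c' : (ι → ℕ) → R}
    (h : ∀ v : ι → R, ∑ m ∈ T, c m * ∏ i, v i ^ m i = ∑ m ∈ T, c' m * ∏ i, v i ^ m i) :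
    Set.EqOn c c' T := by
  classical
  let P : ((ι → ℕ) → R) → MvPolynomial ι R := fun c =>
    ∑ m ∈ T, MvPolynomial.monomial (Finsupp.equivFunOnFinite.symm m) (c m)
  have eval_P (c : (ι → ℕ) → R) (v : ι → R) :
      MvPolynomial.eval v (P c) = ∑ m ∈ T, c m * ∏ i, v i ^ m i := by
    simp [P, MvPolynomial.eval_monomial, Finsupp.prod_fintype]
  have coeff_P (c : (ι → ℕ) → R) {m} (hm : m ∈ T) :
      (P c).coeff (Finsupp.equivFunOnFinite.symm m) = c m := by
    simp [P, MvPolynomial.coeff_sum, MvPolynomial.coeff_monomial, hm]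
  have hP : P c = P c' := MvPolynomial.funext fun v => by rw [eval_P, eval_P, h]
  intro m hm
  rw [← coeff_P c hm, hP, coeff_P c' hm]

section Induced

variable [CommSemiring R] [DecidableEq ι]

theorem sum_mul_mulVec_mul_mulVec_of_transpose_mul_diagonal_mul {A : Matrix ι ι R} {p D : ι → R}
    (hK : Aᵀ * diagonal p * A = diagonal D) (v w : ι → R) :
    ∑ i, p i * ((A *ᵥ v) i * (A *ᵥ w) i) = ∑ j, D j * (v j * w j) :=
  calc ∑ i, p i * ((A *ᵥ v) i * (A *ᵥ w) i)
      = (A *ᵥ v) ⬝ᵥ (diagonal p *ᵥ (A *ᵥ w)) := by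
        simp only [dotProduct, mulVec_diagonal, mul_left_comm]
    _ = v ⬝ᵥ ((Aᵀ * diagonal p * A) *ᵥ w) := by
        rw [← mulVec_mulVec, ← mulVec_mulVec, dotProduct_mulVec v, vecMul_transpose]
    _ = ∑ j, D j * (v j * w j) := by
        simp only [hK, dotProduct, mulVec_diagonal, mul_left_comm]

/-- The paper's `(A v)^m = ∑ n, Ā m n v^n`, with degree-`N` monomials `v^n = ∏ j, v j ^ n j`
indexed by exponent vectors `n ∈ piAntidiag univ N`. -/
def IsInducedMatrix (A : Matrix ι ι R) (N : ℕ) (Abar : (ι → ℕ) → (ι → ℕ) → R) : Prop :=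
  ∀ k ∈ piAntidiag univ N, ∀ v : ι → R,
    ∏ i, (A *ᵥ v) i ^ k i = ∑ n ∈ piAntidiag univ N, Abar k n * ∏ j, v j ^ n j

theorem IsInducedMatrix.sum_multinomial_mul_prod_pow_mul_mul {A : Matrix ι ι R} {N : ℕ}
    {Abar : (ι → ℕ) → (ι → ℕ) → R} (hA : IsInducedMatrix A N Abar) {p D : ι → R}
    (hK : Aᵀ * diagonal p * A = diagonal D) (v w : ι → R) :
    ∑ k ∈ piAntidiag univ N, (Nat.multinomial univ k * ∏ i, p i ^ k i) *
        ((∑ m ∈ piAntidiag univ N, Abar k m * ∏ j, v j ^ m j) *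
          (∑ n ∈ piAntidiag univ N, Abar k n * ∏ j, w j ^ n j)) =
      ∑ n ∈ piAntidiag univ N, (Nat.multinomial univ n * ∏ j, D j ^ n j) *
        ((∏ j, v j ^ n j) * ∏ j, w j ^ n j) :=
  calc _ = ∑ k ∈ piAntidiag univ N,
          (Nat.multinomial univ k : R) * ∏ i, (p i * ((A *ᵥ v) i * (A *ᵥ w) i)) ^ k i := by
        refine sum_congr rfl fun k hk => ?_
        rw [← hA k hk, ← hA k hk]
        simp only [mul_pow, prod_mul_distrib, mul_assoc]
    _ = (∑ i, p i * ((A *ᵥ v) i * (A *ᵥ w) i)) ^ N := (sum_pow_eq_sum_piAntidiag _ _ _).symm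
    _ = (∑ j, D j * (v j * w j)) ^ N := by
        rw [sum_mul_mulVec_mul_mulVec_of_transpose_mul_diagonal_mul hK]
    _ = _ := by
        rw [sum_pow_eq_sum_piAntidiag]
        simp only [mul_pow, prod_mul_distrib, mul_assoc]

end Induced

theorem krawtchouk_matrix_orthogonality_general
    (d N : ℕ) (A : Matrix (Fin (d + 1)) (Fin (d + 1)) ℝ)
    (p Dd : Fin (d + 1) → ℝ)
    (hK : Aᵀ * Matrix.diagonal p * A = Matrix.diagonal Dd)
    (Abar : (Fin (d + 1) → ℕ) → (Fin (d + 1) → ℕ) → ℝ)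
    (hA : ∀ m ∈ Finset.Nat.antidiagonalTuple (d + 1) N, ∀ v : Fin (d + 1) → ℝ,
      ∏ i, (∑ j, A i j * v j) ^ m i =
        ∑ n ∈ Finset.Nat.antidiagonalTuple (d + 1) N,
          Abar m n * ∏ j, v j ^ n j) :
    ∀ m ∈ Finset.Nat.antidiagonalTuple (d + 1) N,
      ∀ n ∈ Finset.Nat.antidiagonalTuple (d + 1) N,
        ∑ k ∈ Finset.Nat.antidiagonalTuple (d + 1) N,
            Abar k m * (Nat.multinomial Finset.univ k : ℝ) *
              (∏ j, p j ^ k j) * Abar k n =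
          (if m = n then
            (Nat.multinomial Finset.univ n : ℝ) * ∏ j, Dd j ^ n j
          else 0) := by
  simp only [← piAntidiag_univ_fin_eq_antidiagonalTuple] at hA ⊢
  set T := piAntidiag (univ : Finset (Fin (d + 1))) N
  have hInd : IsInducedMatrix A N Abar := hA
  have hgen (v w : Fin (d + 1) → ℝ) :
      ∑ m ∈ T, (∑ n ∈ T, (∑ k ∈ T, Abar k m * (Nat.multinomial univ k : ℝ) *
          (∏ j, p j ^ k j) * Abar k n) * ∏ j, w j ^ n j) * ∏ j, v j ^ m j =
        ∑ m ∈ T, (∑ n ∈ T, (if m = n then (Nat.multinomial univ n : ℝ) * ∏ j, Dd j ^ n j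
          else 0) * ∏ j, w j ^ n j) * ∏ j, v j ^ m j :=
    calc _ = ∑ k ∈ T, (Nat.multinomial univ k * ∏ j, p j ^ k j) *
          ((∑ m ∈ T, Abar k m * ∏ j, v j ^ m j) * (∑ n ∈ T, Abar k n * ∏ j, w j ^ n j)) := by
          simp_rw [sum_mul_sum, sum_mul, mul_sum]
          refine sum_comm_cycle.trans <| sum_congr rfl fun _ _ => sum_congr rfl fun _ _ =>
            sum_congr rfl fun _ _ => by ring
      _ = ∑ n ∈ T, (Nat.multinomial univ n * ∏ j, Dd j ^ n j) *
          ((∏ j, v j ^ n j) * ∏ j, w j ^ n j) :=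
        hInd.sum_multinomial_mul_prod_pow_mul_mul hK v w
      _ = _ := by
        simp only [ite_mul, zero_mul, sum_ite_eq]
        exact sum_congr rfl fun n hn => by rw [if_pos hn]; ring
  intro m hm n hn
  exact eqOn_of_forall_sum_mul_prod_pow_eq
    (fun w => eqOn_of_forall_sum_mul_prod_pow_eq (hgen · w) hm) hn

/-- Orthogonality of the Krawtchouk matrix `Φ = (Ā)ᵀ`:
`Φ B 𝔭̄ Φᵀ = B D̄`, written entrywise, where `B` is the diagonal matrix of
multinomial coefficients and `𝔭̄`, `D̄` are the (diagonal) induced matrices of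
`𝔭` and `D` at level `N`. -/
theorem krawtchouk_matrix_orthogonality
    (d N : ℕ) (A : Matrix (Fin (d + 1)) (Fin (d + 1)) ℝ)
    (p Dd : Fin (d + 1) → ℝ)
    (hp : ∀ ℓ, 0 < p ℓ) (hpsum : ∑ ℓ, p ℓ = 1)
    (hD : ∀ ℓ, 0 < Dd ℓ) (hD0 : Dd 0 = 1)
    (hcol : ∀ ℓ, A ℓ 0 = 1)
    (hK : Aᵀ * Matrix.diagonal p * A = Matrix.diagonal Dd)
    (Abar : (Fin (d + 1) → ℕ) → (Fin (d + 1) → ℕ) → ℝ)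
    (hA : ∀ m ∈ Finset.Nat.antidiagonalTuple (d + 1) N, ∀ v : Fin (d + 1) → ℝ,
      ∏ i, (∑ j, A i j * v j) ^ m i =
        ∑ n ∈ Finset.Nat.antidiagonalTuple (d + 1) N,
          Abar m n * ∏ j, v j ^ n j) :
    ∀ m ∈ Finset.Nat.antidiagonalTuple (d + 1) N,
      ∀ n ∈ Finset.Nat.antidiagonalTuple (d + 1) N,
        ∑ k ∈ Finset.Nat.antidiagonalTuple (d + 1) N,
            Abar k m * (Nat.multinomial Finset.univ k : ℝ) *
              (∏ j, p j ^ k j) * Abar k n =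
          (if m = n then
            (Nat.multinomial Finset.univ n : ℝ) * ∏ j, Dd j ^ n j
          else 0) :=
  krawtchouk_matrix_orthogonality_general d N A p Dd hK Abar hA
end

section
/- Let A satisfy the K-condition with C = A⁻¹ and define V_k(z) = (Σ_λ C_{kλ} e^{z_λ}) / (Σ_μ p_μ e^{z_μ}) with z_0 = 0. Then for 1 ≤ i, j ≤ d, the partial derivatives satisfy the Riccati equations ∂V_i/∂z_j = (C_{ij} − p_j V_i) · (Σ_μ A_{jμ} V_μ). -/
open Finset Matrix Real

/-!
Along the coordinate `z_j` both the numerator `∑_λ C_{iλ} e^{z_λ}` and the denominator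
`S = ∑_μ p_μ e^{z_μ}` of `V_i` differentiate to a multiple of `e^{z_j}`, so the quotient rule gives
`∂V_i/∂z_j = (C_{ij} - p_j V_i) e^{z_j} / S`. Since `A C = 1`, applying `A` to the vector `V`
recovers `e^{z_j} / S = ∑_μ A_{jμ} V_μ`.
-/

section

variable {ι : Type*} [Fintype ι] [DecidableEq ι]

theorem hasDerivAt_sum_mul_exp_update (c z : ι → ℝ) (j : ι) (s : ℝ) :
    HasDerivAt (fun t => ∑ l, c l * exp (Function.update z j t l)) (c j * exp s) s := by
  have hcoord := hasDerivAt_pi.1 (hasDerivAt_update z j s)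
  have hsum := HasDerivAt.fun_sum (u := univ) fun l _ => ((hcoord l).exp).const_mul (c l)
  simpa [Pi.single_apply] using hsum

theorem hasDerivAt_sum_mul_exp_div_sum_mul_exp (c q z : ι → ℝ) (j : ι)
    (hS : ∑ μ, q μ * exp (z μ) ≠ 0) :
    HasDerivAt
      (fun t => (∑ l, c l * exp (Function.update z j t l)) /
        ∑ μ, q μ * exp (Function.update z j t μ))
      ((c j - q j * ((∑ l, c l * exp (z l)) / ∑ μ, q μ * exp (z μ))) *
        (exp (z j) / ∑ μ, q μ * exp (z μ))) (z j) := by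
  have hquot := (hasDerivAt_sum_mul_exp_update c z j (z j)).fun_div
    (hasDerivAt_sum_mul_exp_update q z j (z j)) (by rwa [Function.update_eq_self])
  rw [Function.update_eq_self] at hquot
  refine hquot.congr_deriv ?_
  field_simp

theorem Matrix.sum_mul_sum_mul_div_of_mul_eq_one {A C : Matrix ι ι ℝ} (h : A * C = 1)
    (w : ι → ℝ) (S : ℝ) (j : ι) :
    ∑ μ, A j μ * ((∑ l, C μ l * w l) / S) = w j / S :=
  calc ∑ μ, A j μ * ((∑ l, C μ l * w l) / S) = (A *ᵥ C *ᵥ w) j / S := by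
        simp only [mulVec, dotProduct, Finset.sum_div, mul_div_assoc]
    _ = w j / S := by rw [mulVec_mulVec, h, one_mulVec]

end

theorem velocity_riccati_general
    (d : ℕ) (A C : Matrix (Fin (d + 1)) (Fin (d + 1)) ℝ)
    (p : Fin (d + 1) → ℝ)
    (hp : ∀ ℓ, 0 < p ℓ)
    (hC₂ : A * C = 1)
    (V : (Fin (d + 1) → ℝ) → Fin (d + 1) → ℝ)
    (hV : ∀ z k, V z k =
      (∑ l, C k l * Real.exp (z l)) / (∑ μ, p μ * Real.exp (z μ))) :
    ∀ z : Fin (d + 1) → ℝ, z 0 = 0 →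
      ∀ i j : Fin (d + 1), i ≠ 0 → j ≠ 0 →
        HasDerivAt (fun t => V (Function.update z j t) i)
          ((C i j - p j * V z i) * ∑ μ, A j μ * V z μ) (z j) := by
  intro z _ i j _ _
  have hS : ∑ μ, p μ * exp (z μ) ≠ 0 :=
    (sum_pos (fun μ _ => mul_pos (hp μ) (exp_pos _)) univ_nonempty).ne'
  simp only [hV, sum_mul_sum_mul_div_of_mul_eq_one hC₂]
  exact hasDerivAt_sum_mul_exp_div_sum_mul_exp (C i) p z j hS

/-- Riccati partial differential equations for the canonical velocity functions
of the Krawtchouk Bernoulli system: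
`∂V_i/∂z_j = (C_{ij} − p_j V_i) ∑_μ A_{jμ} V_μ` for `1 ≤ i, j ≤ d`. -/
theorem velocity_riccati
    (d : ℕ) (A C : Matrix (Fin (d + 1)) (Fin (d + 1)) ℝ)
    (p Dd : Fin (d + 1) → ℝ)
    (hp : ∀ ℓ, 0 < p ℓ) (hpsum : ∑ ℓ, p ℓ = 1)
    (hD : ∀ ℓ, 0 < Dd ℓ) (hD0 : Dd 0 = 1)
    (hcol : ∀ ℓ, A ℓ 0 = 1)
    (hK : Aᵀ * Matrix.diagonal p * A = Matrix.diagonal Dd)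
    (hC₁ : C * A = 1) (hC₂ : A * C = 1)
    (V : (Fin (d + 1) → ℝ) → Fin (d + 1) → ℝ)
    (hV : ∀ z k, V z k =
      (∑ l, C k l * Real.exp (z l)) / (∑ μ, p μ * Real.exp (z μ))) :
    ∀ z : Fin (d + 1) → ℝ, z 0 = 0 →
      ∀ i j : Fin (d + 1), i ≠ 0 → j ≠ 0 →
        HasDerivAt (fun t => V (Function.update z j t) i)
          ((C i j - p j * V z i) * ∑ μ, A j μ * V z μ) (z j) :=
  velocity_riccati_general d A C p hp hC₂ V hV
end

section
/- Let A satisfy the K-condition and define U_k(v) = log((Σ_μ A_{kμ} v_μ)/(Σ_ν A_{0ν} v_ν)) for 1 ≤ k ≤ d (with v_0 = 1, all relevant quantities positive), and V_k(z) as above. Then U and V are inverse to each other: U_k(V(z)) = z_k for all k = 1,...,d. -/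
open Finset Matrix Real

/-- `U` and `V` are inverse to each other: with
`U_k(v) = log((∑_μ A_{kμ} v_μ)/(∑_ν A_{0ν} v_ν))` and
`V_k(z) = (∑_λ C_{kλ} e^{z_λ})/(∑_μ p_μ e^{z_μ})`, one has `U_k(V(z)) = z_k`. -/
theorem U_V_inverse
    (d : ℕ) (A C : Matrix (Fin (d + 1)) (Fin (d + 1)) ℝ)
    (p Dd : Fin (d + 1) → ℝ)
    (hp : ∀ ℓ, 0 < p ℓ) (hpsum : ∑ ℓ, p ℓ = 1)
    (hD : ∀ ℓ, 0 < Dd ℓ) (hD0 : Dd 0 = 1)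
    (hcol : ∀ ℓ, A ℓ 0 = 1)
    (hK : Aᵀ * Matrix.diagonal p * A = Matrix.diagonal Dd)
    (hC₁ : C * A = 1) (hC₂ : A * C = 1)
    (V : (Fin (d + 1) → ℝ) → Fin (d + 1) → ℝ)
    (hV : ∀ z k, V z k =
      (∑ l, C k l * Real.exp (z l)) / (∑ μ, p μ * Real.exp (z μ))) :
    ∀ z : Fin (d + 1) → ℝ, z 0 = 0 →
      ∀ k : Fin (d + 1), k ≠ 0 →
        (0 < ∑ μ, A k μ * V z μ) → (0 < ∑ ν, A 0 ν * V z ν) →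
        Real.log ((∑ μ, A k μ * V z μ) / (∑ ν, A 0 ν * V z ν)) = z k := by
  intro z hz0 k hk hpos1 hpos2
  set S := ∑ μ, p μ * Real.exp (z μ) with hS
  have key : ∀ j, (∑ μ, A j μ * V z μ) = Real.exp (z j) / S := by
    intro j
    have : (∑ μ, A j μ * V z μ)
        = (∑ μ, A j μ * (∑ l, C μ l * Real.exp (z l))) / S := by
      rw [Finset.sum_div]
      refine Finset.sum_congr rfl fun μ _ => ?_
      rw [hV, mul_div_assoc]
    rw [this]
    congr 1
    have : (∑ μ, A j μ * (∑ l, C μ l * Real.exp (z l)))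
        = ∑ l, (∑ μ, A j μ * C μ l) * Real.exp (z l) := by
      simp_rw [Finset.mul_sum, Finset.sum_mul]
      rw [Finset.sum_comm]
      simp [mul_assoc]
    rw [this]
    have h1 : ∀ l, (∑ μ, A j μ * C μ l) = (A * C) j l := fun l => rfl
    simp_rw [h1, hC₂, Matrix.one_apply]
    simp
  rw [key k, key 0, hz0, Real.exp_zero]
  have hS0 : S ≠ 0 := by
    intro h
    rw [key k, h, div_zero] at hpos1
    exact lt_irrefl 0 hpos1
  rw [div_div_div_cancel_right₀, div_one, Real.log_exp] <;> try exact hS0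
end

section
/- Let A satisfy the K-condition. Define the coherent-state Leibniz function Υ(B,V) = Σ_x (multinomial weight at x) · G_x(B) · G_x(V), where G_x(v) = (Σ_μ A_{0μ}v_μ)^{N−Σx_i} ∏_i (Σ_μ A_{iμ}v_μ)^{x_i} with v_0 = 1. Then Υ(B,V) = (Σ_μ B_μ D_μ V_μ)^N, where B_0 = V_0 = 1 and D_μ are the diagonal entries of D. -/
/-!
Since `G x B · G x V = ∏_ℓ ((A B)_ℓ (A V)_ℓ)^{x_ℓ}`, by the multinomial theorem the weighted
sum is `(∑_ℓ p_ℓ (A B)_ℓ (A V)_ℓ)^N`. The inner sum is the bilinear form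
`Bᵀ (Aᵀ 𝔭 A) V`, which the K-condition turns into `∑_μ B_μ D_μ V_μ`.
-/

open Finset Matrix

section

variable {ι R : Type*} [CommSemiring R]

theorem Finset.sum_multinomial_mul_prod_pow_mul_prod_pow [DecidableEq ι] (s : Finset ι)
    (p a b : ι → R) (N : ℕ) :
    ∑ x ∈ piAntidiag s N, (Nat.multinomial s x : R) * (∏ i ∈ s, p i ^ x i) *
        (∏ i ∈ s, a i ^ x i) * ∏ i ∈ s, b i ^ x i =
      (∑ i ∈ s, p i * a i * b i) ^ N := by
  rw [sum_pow_eq_sum_piAntidiag]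
  refine sum_congr rfl fun x _ => ?_
  simp only [mul_pow, prod_mul_distrib, mul_assoc]

variable {m n : Type*} [Fintype m] [Fintype n]

theorem Matrix.sum_mul_mulVec_mul_mulVec [DecidableEq m] (A : Matrix m n R) (p : m → R)
    (v w : n → R) :
    ∑ ℓ, p ℓ * (A *ᵥ v) ℓ * (A *ᵥ w) ℓ = v ⬝ᵥ (Aᵀ * diagonal p * A) *ᵥ w := by
  rw [← mulVec_mulVec, ← mulVec_mulVec, dotProduct_mulVec, vecMul_transpose]
  simp only [dotProduct, mulVec_diagonal, mul_assoc, mul_left_comm]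

theorem Matrix.dotProduct_diagonal_mulVec [DecidableEq n] (v e w : n → R) :
    v ⬝ᵥ diagonal e *ᵥ w = ∑ i, v i * e i * w i := by
  simp only [dotProduct, mulVec_diagonal, mul_assoc]

end

theorem krawtchouk_leibniz_function_general
    (d N : ℕ) (A : Matrix (Fin (d + 1)) (Fin (d + 1)) ℝ)
    (p Dd : Fin (d + 1) → ℝ)
    (hK : Aᵀ * Matrix.diagonal p * A = Matrix.diagonal Dd)
    (G : (Fin (d + 1) → ℕ) → (Fin (d + 1) → ℝ) → ℝ)
    (hG : ∀ x v, G x v = ∏ ℓ, (∑ μ, A ℓ μ * v μ) ^ x ℓ)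
    (B V : Fin (d + 1) → ℝ) :
    ∑ x ∈ Finset.Nat.antidiagonalTuple (d + 1) N,
        (Nat.multinomial Finset.univ x : ℝ) * (∏ ℓ, p ℓ ^ x ℓ) *
          G x B * G x V =
      (∑ μ, B μ * Dd μ * V μ) ^ N := by
  have hGmulVec : ∀ x v, G x v = ∏ ℓ, (A *ᵥ v) ℓ ^ x ℓ := hG
  simp_rw [hGmulVec, ← piAntidiag_univ_fin_eq_antidiagonalTuple,
    sum_multinomial_mul_prod_pow_mul_prod_pow, sum_mul_mulVec_mul_mulVec, hK,
    dotProduct_diagonal_mulVec]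

/-- Leibniz function for the Krawtchouk system: the multinomial average of the
product of two coherent-state generating functions equals
`(∑_μ B_μ D_μ V_μ)^N` with `B₀ = V₀ = 1`. -/
theorem krawtchouk_leibniz_function
    (d N : ℕ) (A : Matrix (Fin (d + 1)) (Fin (d + 1)) ℝ)
    (p Dd : Fin (d + 1) → ℝ)
    (hp : ∀ ℓ, 0 < p ℓ) (hpsum : ∑ ℓ, p ℓ = 1)
    (hD : ∀ ℓ, 0 < Dd ℓ) (hD0 : Dd 0 = 1)
    (hcol : ∀ ℓ, A ℓ 0 = 1)
    (hK : Aᵀ * Matrix.diagonal p * A = Matrix.diagonal Dd)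
    (G : (Fin (d + 1) → ℕ) → (Fin (d + 1) → ℝ) → ℝ)
    (hG : ∀ x v, G x v = ∏ ℓ, (∑ μ, A ℓ μ * v μ) ^ x ℓ)
    (B V : Fin (d + 1) → ℝ) (hB0 : B 0 = 1) (hV0 : V 0 = 1) :
    ∑ x ∈ Finset.Nat.antidiagonalTuple (d + 1) N,
        (Nat.multinomial Finset.univ x : ℝ) * (∏ ℓ, p ℓ ^ x ℓ) *
          G x B * G x V =
      (∑ μ, B μ * Dd μ * V μ) ^ N :=
  krawtchouk_leibniz_function_general d N A p Dd hK G hG B V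
end
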